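/- In a correct packet switching network, if there is a local deadlock then there is a weak deadlock: L(K) ≠ ∅ implies W(K) ≠ ∅. Moreover, from any local deadlock state s a weak deadlock state s' is reachable via process and receive steps only. -/

import Mathlib

structure PSN where
  Node : Type
  Chan : Type
  fintypeNode : Fintype Node
  decEqNode : DecidableEq Node
  fintypeChan : Fintype Chan
  decEqChan : DecidableEq Chan
  M : Finset Node
  hM : 2 ≤ M.card
  source : Chan → Node
  target : Chan → Node
  rout : Node → Node → Chan
  rout_source : ∀ n m, m ∈ M → m ≠ n → source (rout n m) = n

attribute [instance] PSN.fintypeNode PSN.decEqNode PSN.fintypeChan PSN.decEqChan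

namespace PSN

variable (P : PSN)

/-- A state records the content of every channel: `none` is an empty channel,
`some m` is a message destined for terminal `m`. -/
abbrev State := P.Chan → Option P.Node

/-- The next hop of a message destined for `m` at node `n`. -/
def nexthop (m n : P.Node) : P.Node := P.target (P.rout n m)

/-- The next channel for a message destined for `m` currently in channel `c`. -/
def nextC (m : P.Node) (c : P.Chan) : P.Chan := P.rout (P.target c) m

/-- The network is correct: every message can reach its destination in a
bounded number of hops. -/
def Correct : Prop := ∀ m ∈ P.M, ∀ n : P.Node, ∃ k : ℕ, (P.nexthop m)^[k] n = m

/-- Initial states: all channels empty. -/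
def init (s : P.State) : Prop := ∀ c, s c = none

/-- Send step: terminal `m` inserts a message for terminal `m' ≠ m` into the
(currently empty) channel `rout m m'`. -/
def sendStep (s s' : P.State) : Prop :=
  ∃ m m', m ∈ P.M ∧ m' ∈ P.M ∧ m ≠ m' ∧ s (P.rout m m') = none ∧
    s' = Function.update s (P.rout m m') (some m')

/-- Process step: a node forwards a message `m` from an incoming channel `c`
(with `target c ≠ m`) to the routed outgoing channel, provided it is empty. -/
def procStep (s s' : P.State) : Prop :=
  ∃ m c, m ∈ P.M ∧ s c = some m ∧ P.target c ≠ m ∧ s (P.nextC m c) = none ∧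
    s' = Function.update (Function.update s c none) (P.nextC m c) (some m)

/-- Receive step: terminal `m` removes a message destined for it from an
incoming channel. -/
def recvStep (s s' : P.State) : Prop :=
  ∃ m c, m ∈ P.M ∧ s c = some m ∧ P.target c = m ∧ s' = Function.update s c none

/-- Send, process or receive transitions. -/
def stepSPR (s s' : P.State) : Prop := P.sendStep s s' ∨ P.procStep s s' ∨ P.recvStep s s'

/-- Process or receive transitions. -/
def stepPR (s s' : P.State) : Prop := P.procStep s s' ∨ P.recvStep s s'

/-- The (total) transition relation of the Kripke structure: send, process and
receive steps, plus self-loops on otherwise-stuck states. -/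
def step (s s' : P.State) : Prop := P.stepSPR s s' ∨ (s = s' ∧ ∀ t, ¬ P.stepSPR s t)

/-- Reachable states: reachable from an initial state. -/
def reachable (s : P.State) : Prop := ∃ s₀, P.init s₀ ∧ Relation.ReflTransGen P.step s₀ s

/-- Global deadlock: no transition to a distinct state. -/
def globalDeadlock (s : P.State) : Prop := ∀ s', P.step s s' → s' = s

/-- Local deadlock at channel `c`: `c` is nonempty and keeps the same content
along every execution. -/
def localDeadlockAt (c : P.Chan) (s : P.State) : Prop :=
  ∀ s', Relation.ReflTransGen P.step s s' → s c ≠ none ∧ s' c = s c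

/-- Local deadlock: some channel is locally deadlocked. -/
def localDeadlock (s : P.State) : Prop := ∃ c, P.localDeadlockAt c s

/-- Weak deadlock: a non-initial state with no process or receive step. -/
def weakDeadlock (s : P.State) : Prop := ¬ P.init s ∧ ∀ s', ¬ P.stepPR s s'

/-- `Nval c v` is the number of hops needed for the content `v` of channel `c`
to reach its destination: `0` for the empty channel, and for a message `m`
one more than the least `l` with `target (nextC m ^[l] c) = m`. -/
noncomputable def Nval (c : P.Chan) : Option P.Node → ℕ
  | none => 0
  | some m => sInf {l | P.target ((P.nextC m)^[l] c) = m} + 1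

/-- The weight of a state: total number of hops needed for all messages
currently in the network to reach their destinations. -/
noncomputable def wt (s : P.State) : ℕ := ∑ c : P.Chan, P.Nval c (s c)

end PSN

/-!
Every process or receive step strictly decreases the weight `wt`, the total number of hops the
messages in the network still need: a receive step removes a message, and in a correct network
a process step moves a message one hop closer to its destination. Hence `→_pr` terminates, and
from a local deadlock state we reach a `→_pr`-normal form. The deadlocked channel is still full
there, so that normal form is not initial, i.e. it is a weak deadlock.
-/

theorem Relation.exists_reflTransGen_forall_not {α : Type*} {r : α → α → Prop}
    (hr : WellFounded (flip r)) (a : α) :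
    ∃ b, Relation.ReflTransGen r a b ∧ ∀ c, ¬ r b c := by
  induction a using hr.induction with
  | _ a ih =>
    by_cases hstuck : ∀ c, ¬ r a c
    · exact ⟨a, .refl, hstuck⟩
    · push Not at hstuck
      obtain ⟨c, hac⟩ := hstuck
      obtain ⟨b, hcb, hb⟩ := ih c hac
      exact ⟨b, .head hac hcb, hb⟩

namespace PSN

variable (P : PSN)

theorem target_iterate_nextC (m : P.Node) (c : P.Chan) (l : ℕ) :
    P.target ((P.nextC m)^[l] c) = (P.nexthop m)^[l] (P.target c) := by
  induction l with
  | zero => rfl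
  | succ l ih => rw [Function.iterate_succ_apply', Function.iterate_succ_apply', ← ih]; rfl

theorem Nval_nextC_lt (hc : P.Correct) {m : P.Node} (hm : m ∈ P.M) {c : P.Chan}
    (hcm : P.target c ≠ m) : P.Nval (P.nextC m c) (some m) < P.Nval c (some m) := by
  have hne : {l | P.target ((P.nextC m)^[l] c) = m}.Nonempty := by
    obtain ⟨k, hk⟩ := hc m hm (P.target c)
    exact ⟨k, by rwa [Set.mem_ofPred_eq, target_iterate_nextC]⟩
  have hmem := Nat.sInf_mem hne
  obtain ⟨k, hk⟩ : ∃ k, sInf {l | P.target ((P.nextC m)^[l] c) = m} = k + 1 :=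
    Nat.exists_eq_add_one.mpr (Nat.pos_of_ne_zero fun h0 => hcm (by rwa [h0] at hmem))
  rw [hk, Set.mem_ofPred_eq, Function.iterate_succ_apply] at hmem
  have hle : sInf {l | P.target ((P.nextC m)^[l] (P.nextC m c)) = m} ≤ k := Nat.sInf_le hmem
  simp only [Nval, hk]
  omega

theorem wt_update_add (s : P.State) (c : P.Chan) (v : Option P.Node) :
    P.wt (Function.update s c v) + P.Nval c (s c) = P.wt s + P.Nval c v := by
  have hrest : ∑ x ∈ Finset.univ.erase c, P.Nval x (Function.update s c v x) =
      ∑ x ∈ Finset.univ.erase c, P.Nval x (s x) :=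
    Finset.sum_congr rfl fun x hx => by rw [Function.update_of_ne (Finset.ne_of_mem_erase hx)]
  simp only [wt, ← Finset.add_sum_erase _ _ (Finset.mem_univ c), hrest, Function.update_self]
  omega

theorem wt_lt_of_stepPR (hc : P.Correct) {s s' : P.State} (h : P.stepPR s s') :
    P.wt s' < P.wt s := by
  rcases h with ⟨m, c, hm, hsc, hcm, hfree, rfl⟩ | ⟨m, c, -, hsc, -, rfl⟩
  · have hcc' : P.nextC m c ≠ c := fun h => by simp [h, hsc] at hfree
    have hempty := P.wt_update_add s c none
    have hfill := P.wt_update_add (Function.update s c none) (P.nextC m c) (some m)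
    have hcloser := P.Nval_nextC_lt hc hm hcm
    rw [Function.update_of_ne hcc', hfree] at hfill
    rw [hsc] at hempty
    simp only [Nval] at hempty hfill hcloser ⊢
    omega
  · have hempty := P.wt_update_add s c none
    simp only [hsc, Nval] at hempty
    omega

theorem wellFounded_flip_stepPR (hc : P.Correct) : WellFounded (flip P.stepPR) :=
  Subrelation.wf (fun h => P.wt_lt_of_stepPR hc h) (measure P.wt).wf

theorem exists_weakDeadlock_of_localDeadlock (hc : P.Correct) {s : P.State}
    (hs : P.localDeadlock s) :
    ∃ s', Relation.ReflTransGen P.stepPR s s' ∧ P.weakDeadlock s' := by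
  obtain ⟨c, hc_dead⟩ := hs
  obtain ⟨s', hss', hnf⟩ :=
    Relation.exists_reflTransGen_forall_not (P.wellFounded_flip_stepPR hc) s
  have hstep : Relation.ReflTransGen P.step s s' :=
    Relation.ReflTransGen.mono (fun _ _ h => Or.inl (Or.inr h)) _ _ hss'
  obtain ⟨hfull, hkept⟩ := hc_dead s' hstep
  exact ⟨s', hss', fun hinit => hfull (hkept ▸ hinit c), hnf⟩

end PSN

/-- If there is a local deadlock then there is a weak deadlock; moreover, from
any local deadlock state a weak deadlock state is reachable via process and
receive steps only. -/
theorem stmt10 (P : PSN) (hc : P.Correct) :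
    ((∃ s, P.localDeadlock s) → ∃ s, P.weakDeadlock s) ∧
    ∀ s, P.localDeadlock s →
      ∃ s', Relation.ReflTransGen P.stepPR s s' ∧ P.weakDeadlock s' := by
  refine ⟨fun ⟨s, hs⟩ => ?_, fun s hs => P.exists_weakDeadlock_of_localDeadlock hc hs⟩
  obtain ⟨s', -, hweak⟩ := P.exists_weakDeadlock_of_localDeadlock hc hs
  exact ⟨s', hweak⟩
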